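/- (Coercivity II algebra) Let Kψ, Qψ > 0 and C₅ = (2/5)(QψKψ)^{-1/4}. Suppose K, Q ≥ 0, P, S real satisfy: P ≤ C₅ Q^{1/4} K^{5/4}, S ≤ c Q^{1/4} K^{5/4} for some c > 0, and Q·K < (1−δ)·Qψ·Kψ with δ ∈ (0,1). Then K − (5/2)P ≥ δ'·S, where δ' = (5C₅/(2c))·(1 − (1−δ)^{1/4})/(1−δ)^{1/4} > 0. -/

import Mathlib

/-! Under the sub-threshold condition, `Q^{1/4} K^{5/4} = (QK)^{1/4} K ≤ θ (QψKψ)^{1/4} K` with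
`θ = (1 - δ)^{1/4} < 1`. Since `C₅ (QψKψ)^{1/4} = 2/5`, the Gagliardo–Nirenberg bound gives
`(5/2) P ≤ θ K`, so `K - (5/2) P ≥ (1 - θ) K`, and the same estimate bounds `δ' S`
by `(1 - θ) K`. -/

open Real

lemma rpow_quarter_mul_rpow_five_quarters_le {Q K M : ℝ} (hQ : 0 ≤ Q) (hK : 0 ≤ K)
    (hQK : Q * K ≤ M) : Q ^ ((1:ℝ)/4) * K ^ ((5:ℝ)/4) ≤ M ^ ((1:ℝ)/4) * K := by
  have hK54 : K ^ ((5:ℝ)/4) = K ^ ((1:ℝ)/4) * K := by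
    rw [show (5:ℝ)/4 = 1/4 + 1 by norm_num, rpow_add' hK (by norm_num), rpow_one]
  calc Q ^ ((1:ℝ)/4) * K ^ ((5:ℝ)/4) = (Q * K) ^ ((1:ℝ)/4) * K := by
        rw [hK54, mul_rpow hQ hK, mul_assoc]
    _ ≤ M ^ ((1:ℝ)/4) * K := by gcongr

lemma rpow_neg_quarter_mul_rpow_quarter {A : ℝ} (hA : 0 < A) :
    A ^ (-(1:ℝ)/4) * A ^ ((1:ℝ)/4) = 1 := by
  rw [← rpow_add hA]
  norm_num

lemma mul_le_sub_five_halves_mul_of_le {K P S B C c a θ : ℝ} (hc : 0 < c) (ha : 0 < a)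
    (hθ0 : 0 < θ) (hθ1 : θ ≤ 1) (hCa : C * a = 2 / 5)
    (hP : P ≤ C * B) (hS : S ≤ c * B) (hB : B ≤ θ * a * K) :
    (5 * C / (2 * c)) * (1 - θ) / θ * S ≤ K - (5/2) * P := by
  have hC : 0 < C := pos_of_mul_pos_left (by rw [hCa]; norm_num) ha.le
  have hδ' : 0 ≤ (5 * C / (2 * c)) * (1 - θ) / θ := by
    have : 0 ≤ 1 - θ := by linarith
    positivity
  calc (5 * C / (2 * c)) * (1 - θ) / θ * S
      ≤ (5 * C / (2 * c)) * (1 - θ) / θ * (c * (θ * a * K)) := by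
        gcongr; exact hS.trans (by gcongr)
    _ = (1 - θ) * K := by
        field_simp
        linear_combination (5 * (1 - θ) * K) * hCa
    _ = K - (5/2) * (C * (θ * a * K)) := by linear_combination (5/2) * θ * K * hCa
    _ ≤ K - (5/2) * P := by gcongr; exact hP.trans (by gcongr)

theorem stmt_4_general (Kψ Qψ : ℝ)
    (C₅ : ℝ) (hC₅ : C₅ = (2 / 5) * (Qψ * Kψ) ^ (-(1:ℝ)/4))
    (K Q P S c δ : ℝ) (hK : 0 ≤ K) (hQ : 0 ≤ Q) (hc : 0 < c)
    (hδ : δ ∈ Set.Ioo (0:ℝ) 1)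
    (hGN : P ≤ C₅ * Q ^ ((1:ℝ)/4) * K ^ ((5:ℝ)/4))
    (hS : S ≤ c * Q ^ ((1:ℝ)/4) * K ^ ((5:ℝ)/4))
    (hsub : Q * K < (1 - δ) * (Qψ * Kψ)) :
    0 < (5 * C₅ / (2 * c)) * (1 - (1 - δ) ^ ((1:ℝ)/4)) / (1 - δ) ^ ((1:ℝ)/4) ∧
    K - (5/2) * P ≥
      ((5 * C₅ / (2 * c)) * (1 - (1 - δ) ^ ((1:ℝ)/4)) / (1 - δ) ^ ((1:ℝ)/4)) * S := by
  obtain ⟨hδ0, hδ1⟩ := hδ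
  have h1δ : 0 < 1 - δ := by linarith
  have hA : 0 < Qψ * Kψ := pos_of_mul_pos_right (hsub.trans_le' (mul_nonneg hQ hK)) h1δ.le
  have hθ0 : 0 < (1 - δ) ^ ((1:ℝ)/4) := rpow_pos_of_pos h1δ _
  have hθ1 : (1 - δ) ^ ((1:ℝ)/4) < 1 := rpow_lt_one h1δ.le (by linarith) (by norm_num)
  have hCa : C₅ * (Qψ * Kψ) ^ ((1:ℝ)/4) = 2 / 5 := by
    rw [hC₅, mul_assoc, rpow_neg_quarter_mul_rpow_quarter hA, mul_one]
  have hB : Q ^ ((1:ℝ)/4) * K ^ ((5:ℝ)/4)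
      ≤ (1 - δ) ^ ((1:ℝ)/4) * (Qψ * Kψ) ^ ((1:ℝ)/4) * K := by
    rw [← mul_rpow h1δ.le hA.le]
    exact rpow_quarter_mul_rpow_five_quarters_le hQ hK hsub.le
  have hC₅pos : 0 < C₅ := by rw [hC₅]; positivity
  have h1θ : 0 < 1 - (1 - δ) ^ ((1:ℝ)/4) := by linarith
  refine ⟨by positivity, ?_⟩
  rw [mul_assoc] at hGN hS
  exact mul_le_sub_five_halves_mul_of_le hc (rpow_pos_of_pos hA _) hθ0 hθ1.le hCa hGN hS hB

/-- Coercivity II algebra. -/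
theorem stmt_4 (Kψ Qψ : ℝ) (hKψ : 0 < Kψ) (hQψ : 0 < Qψ)
    (C₅ : ℝ) (hC₅ : C₅ = (2 / 5) * (Qψ * Kψ) ^ (-(1:ℝ)/4))
    (K Q P S c δ : ℝ) (hK : 0 ≤ K) (hQ : 0 ≤ Q) (hc : 0 < c)
    (hδ : δ ∈ Set.Ioo (0:ℝ) 1)
    (hGN : P ≤ C₅ * Q ^ ((1:ℝ)/4) * K ^ ((5:ℝ)/4))
    (hS : S ≤ c * Q ^ ((1:ℝ)/4) * K ^ ((5:ℝ)/4))
    (hsub : Q * K < (1 - δ) * (Qψ * Kψ)) :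
    0 < (5 * C₅ / (2 * c)) * (1 - (1 - δ) ^ ((1:ℝ)/4)) / (1 - δ) ^ ((1:ℝ)/4) ∧
    K - (5/2) * P ≥
      ((5 * C₅ / (2 * c)) * (1 - (1 - δ) ^ ((1:ℝ)/4)) / (1 - δ) ^ ((1:ℝ)/4)) * S :=
  stmt_4_general Kψ Qψ C₅ hC₅ K Q P S c δ hK hQ hc hδ hGN hS hsub
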